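/- For any policy class Π ⊆ {-1,+1}^X and any π* ∈ Π, the threshold dimension with respect to π* satisfies Tdim_{π*}(Π) ≤ 2·Tdim_{+1}(Π), where Tdim_{+1} is the threshold dimension with respect to the constant function +1. -/
import Mathlib


/-- Eluder witness sequence of length `m` for class `P` w.r.t. base function `g`:
`π_i(x_i) ≠ g(x_i)` for all `i`, and `π_i(x_j) = g(x_j)` for all `j < i`. -/
def IsEluderSeq {X : Type*} (P : Set (X → Bool)) (g : X → Bool) (m : ℕ)
    (x : Fin m → X) (p : Fin m → (X → Bool)) : Prop :=
  (∀ i, p i ∈ P) ∧ (∀ i, p i (x i) ≠ g (x i)) ∧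
    ∀ i j : Fin m, j < i → p i (x j) = g (x j)

/-- Star witness sequence of length `m`: `π_i(x_i) ≠ g(x_i)` and
`π_i(x_j) = g(x_j)` for all `j ≠ i`. -/
def IsStarSeq {X : Type*} (P : Set (X → Bool)) (g : X → Bool) (m : ℕ)
    (x : Fin m → X) (p : Fin m → (X → Bool)) : Prop :=
  (∀ i, p i ∈ P) ∧ (∀ i, p i (x i) ≠ g (x i)) ∧
    ∀ i j : Fin m, j ≠ i → p i (x j) = g (x j)

/-- Threshold witness sequence of length `m`: `π_i(x_j) = g(x_j)` for `j < i`
and `π_i(x_j) ≠ g(x_j)` for `j ≥ i`. -/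
def IsThresholdSeq {X : Type*} (P : Set (X → Bool)) (g : X → Bool) (m : ℕ)
    (x : Fin m → X) (p : Fin m → (X → Bool)) : Prop :=
  (∀ i, p i ∈ P) ∧ (∀ i j : Fin m, j < i → p i (x j) = g (x j)) ∧
    ∀ i j : Fin m, i ≤ j → p i (x j) ≠ g (x j)

/-- Policy eluder dimension of `P` w.r.t. `g` (as an extended natural number). -/
noncomputable def edim {X : Type*} (P : Set (X → Bool)) (g : X → Bool) : ℕ∞ :=
  ⨆ (m : ℕ) (_ : ∃ (x : Fin m → X) (p : Fin m → (X → Bool)), IsEluderSeq P g m x p), (m : ℕ∞)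

/-- Star number of `P` w.r.t. `g`. -/
noncomputable def sdim {X : Type*} (P : Set (X → Bool)) (g : X → Bool) : ℕ∞ :=
  ⨆ (m : ℕ) (_ : ∃ (x : Fin m → X) (p : Fin m → (X → Bool)), IsStarSeq P g m x p), (m : ℕ∞)

/-- Threshold dimension of `P` w.r.t. `g`. -/
noncomputable def tdim {X : Type*} (P : Set (X → Bool)) (g : X → Bool) : ℕ∞ :=
  ⨆ (m : ℕ) (_ : ∃ (x : Fin m → X) (p : Fin m → (X → Bool)), IsThresholdSeq P g m x p), (m : ℕ∞)

lemma subseq_lemma {X : Type*} {P : Set (X → Bool)} {g : X → Bool} {m k : ℕ}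
    {x : Fin m → X} {p : Fin m → (X → Bool)} (h : IsThresholdSeq P g m x p)
    (e : Fin k → Fin m) (he : StrictMono e) :
    IsThresholdSeq P g k (x ∘ e) (p ∘ e) := by
  obtain ⟨h1, h2, h3⟩ := h
  refine ⟨fun i => h1 _, fun i j hij => h2 _ _ (he hij), fun i j hij => h3 _ _ (he.le_iff_le.mpr hij)⟩

lemma reverse_lemma {X : Type*} {P : Set (X → Bool)} {g : X → Bool} (hg : g ∈ P) {m : ℕ}
    {x : Fin m → X} {p : Fin m → (X → Bool)} (h : IsThresholdSeq P g m x p)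
    (hf : ∀ j, g (x j) = false) :
    ∃ (y : Fin m → X) (q : Fin m → (X → Bool)), IsThresholdSeq P (fun _ => true) m y q := by
  obtain ⟨h1, h2, h3⟩ := h
  refine ⟨fun j => x ⟨m - 1 - j, by omega⟩,
    fun i => if h : (i : ℕ) = 0 then g else p ⟨m - i, by have := i.isLt; omega⟩, ?_, ?_, ?_⟩
  · intro i; dsimp only; split <;> [exact hg; exact h1 _]
  · intro i j hij
    have hj := j.isLt; have hi := i.isLt
    have hi0 : (i : ℕ) ≠ 0 := by have h' : (j : ℕ) < (i : ℕ) := hij; omega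
    simp only [dif_neg hi0]
    have := h3 ⟨m - i, by omega⟩ ⟨m - 1 - j, by omega⟩ (by simp [Fin.le_def]; omega)
    rw [hf] at this
    simpa using this
  · intro i j hij
    have hj := j.isLt; have hi := i.isLt
    have hle : (i : ℕ) ≤ j := hij
    dsimp only; split
    · rw [hf]; simp
    · rename_i hi0
      have := h2 ⟨m - i, by omega⟩ ⟨m - 1 - j, by omega⟩ (by simp [Fin.lt_def]; omega)
      rw [hf] at this
      simp [this]

lemma true_lemma {X : Type*} {P : Set (X → Bool)} {g : X → Bool} {m : ℕ}
    {x : Fin m → X} {p : Fin m → (X → Bool)} (h : IsThresholdSeq P g m x p)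
    (hf : ∀ j, g (x j) = true) :
    IsThresholdSeq P (fun _ => true) m x p := by
  obtain ⟨h1, h2, h3⟩ := h
  exact ⟨h1, fun i j hij => by rw [h2 i j hij, hf], fun i j hij => by
    have := h3 i j hij; rw [hf] at this; simpa using this⟩

lemma le_tdim {X : Type*} {P : Set (X → Bool)} {g : X → Bool} {m : ℕ}
    (h : ∃ (x : Fin m → X) (p : Fin m → (X → Bool)), IsThresholdSeq P g m x p) :
    (m : ℕ∞) ≤ tdim P g :=
  le_iSup₂ (f := fun m (_ : ∃ (x : Fin m → X) (p : Fin m → (X → Bool)), IsThresholdSeq P g m x p) => (m : ℕ∞)) m h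

/-- for `π* ∈ Π`, `Tdim_{π*}(Π) ≤ 2 · Tdim_{+1}(Π)`
(`true` plays the role of the constant `+1`). -/
theorem tdim_le_two_mul_tdim_const {X : Type*} (P : Set (X → Bool)) (g : X → Bool)
    (hg : g ∈ P) :
    tdim P g ≤ 2 * tdim P (fun _ => true) := by
  refine iSup_le fun m => iSup_le fun ⟨x, p, h⟩ => ?_
  classical
  set s : Finset (Fin m) := Finset.univ.filter (fun i => g (x i) = true) with hs
  have hcard : s.card + sᶜ.card = m := by
    rw [Finset.card_add_card_compl, Fintype.card_fin]
  -- true part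
  have h1 : (s.card : ℕ∞) ≤ tdim P (fun _ => true) := by
    apply le_tdim
    refine ⟨x ∘ s.orderEmbOfFin rfl, p ∘ s.orderEmbOfFin rfl, true_lemma
      (subseq_lemma h _ (s.orderEmbOfFin rfl).strictMono) fun j => ?_⟩
    have := Finset.orderEmbOfFin_mem s rfl j
    exact (Finset.mem_filter.mp this).2
  have h2 : (sᶜ.card : ℕ∞) ≤ tdim P (fun _ => true) := by
    apply le_tdim
    have hsub := subseq_lemma h _ (sᶜ.orderEmbOfFin rfl).strictMono
    refine reverse_lemma hg hsub fun j => ?_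
    have := Finset.orderEmbOfFin_mem sᶜ rfl j
    have h' := Finset.mem_compl.mp this
    have h'' : ¬ g (x ((sᶜ.orderEmbOfFin rfl) j)) = true :=
      fun hh => h' (Finset.mem_filter.mpr ⟨Finset.mem_univ _, hh⟩)
    simpa using h''
  calc (m : ℕ∞) = (s.card : ℕ∞) + (sᶜ.card : ℕ∞) := by
        rw [← Nat.cast_add, hcard]
    _ ≤ tdim P (fun _ => true) + tdim P (fun _ => true) := add_le_add h1 h2
    _ = 2 * tdim P (fun _ => true) := (two_mul _).symm
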